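/- arXiv:2104.07159 — 2 statements merged into one kernel-verified Lean document; each statement's English description precedes it below -/
import Mathlib

section
/- Let K = (G, M, I) be a finite formal context and S = [H, N] a subcontext of K that is isomorphic to a contranominal scale N^c(k) (i.e., S is a reduced Boolean subcontext of dimension k). Then the image of the concept lattice of S under the map φ₁(A,B) = (A'', A') is a sub-join-semilattice of B(K), and the image under φ₂(A,B) = (B', B'') is a sub-meet-semilattice of B(K). -/
variable {G M : Type*} [Fintype G] [Fintype M]

/-- Attribute derivation A' of an object set A w.r.t. incidence I. -/
def ctxExtDeriv (I : Set (G × M)) (A : Set G) : Set M := {m | ∀ g ∈ A, (g, m) ∈ I}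

/-- Object derivation B' of an attribute set B w.r.t. incidence I. -/
def intDeriv (I : Set (G × M)) (B : Set M) : Set G := {g | ∀ m ∈ B, (g, m) ∈ I}

/-- (A,B) is a formal concept of (G,M,I). -/
def IsConcept (I : Set (G × M)) (A : Set G) (B : Set M) : Prop :=
  ctxExtDeriv I A = B ∧ intDeriv I B = A

/-- Derivation of an object set inside the (sub)context (H,N,J). -/
def subExtDeriv (N : Set M) (J : Set (G × M)) (A : Set G) : Set M :=
  {n ∈ N | ∀ g ∈ A, (g, n) ∈ J}

/-- Derivation of an attribute set inside the (sub)context (H,N,J). -/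
def subIntDeriv (H : Set G) (J : Set (G × M)) (B : Set M) : Set G :=
  {h ∈ H | ∀ n ∈ B, (h, n) ∈ J}

/-- (A,B) is a formal concept of the context (H,N,J). -/
def IsSubConcept (H : Set G) (N : Set M) (J : Set (G × M)) (A : Set G) (B : Set M) : Prop :=
  A ⊆ H ∧ B ⊆ N ∧ subExtDeriv N J A = B ∧ subIntDeriv H J B = A

/-- (H,N,J) is a closed-subcontext of (G,M,I). -/
def IsClosedSubcontext (I : Set (G × M)) (H : Set G) (N : Set M) (J : Set (G × M)) : Prop :=
  J ⊆ I ∩ H ×ˢ N ∧ ∀ A B, IsSubConcept H N J A B → IsConcept I A B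

/-- Binary join in the concept lattice of (G,M,I). -/
def conceptJoin (I : Set (G × M)) (c d : Set G × Set M) : Set G × Set M :=
  (intDeriv I (c.2 ∩ d.2), c.2 ∩ d.2)

/-- Binary meet in the concept lattice of (G,M,I). -/
def conceptMeet (I : Set (G × M)) (c d : Set G × Set M) : Set G × Set M :=
  (c.1 ∩ d.1, ctxExtDeriv I (c.1 ∩ d.1))

/-- S is a sublattice of the concept lattice of (G,M,I). -/
def IsConceptSublattice (I : Set (G × M)) (S : Set (Set G × Set M)) : Prop :=
  S.Nonempty ∧ (∀ c ∈ S, IsConcept I c.1 c.2) ∧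
    ∀ c ∈ S, ∀ d ∈ S, conceptJoin I c d ∈ S ∧ conceptMeet I c d ∈ S

/-- Image of the concept set of the subcontext [H,N] under φ₁(A,B)=(A'',A'). -/
def phi1Image (I : Set (G × M)) (H : Set G) (N : Set M) : Set (Set G × Set M) :=
  {c | ∃ A B, IsSubConcept H N (I ∩ H ×ˢ N) A B ∧
      c = (intDeriv I (ctxExtDeriv I A), ctxExtDeriv I A)}

/-- Image of the concept set of the subcontext [H,N] under φ₂(A,B)=(B',B''). -/
def phi2Image (I : Set (G × M)) (H : Set G) (N : Set M) : Set (Set G × Set M) :=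
  {c | ∃ A B, IsSubConcept H N (I ∩ H ×ˢ N) A B ∧
      c = (intDeriv I B, ctxExtDeriv I (intDeriv I B))}

/-- [H,N] is (isomorphic to) a contranominal scale of dimension k in (G,M,I). -/
def IsContranominal (I : Set (G × M)) (k : ℕ) (H : Set G) (N : Set M) : Prop :=
  ∃ f : Fin k → G, ∃ g : Fin k → M, Function.Injective f ∧ Function.Injective g ∧
    H = Set.range f ∧ N = Set.range g ∧ ∀ i j, (f i, g j) ∈ I ↔ i ≠ j

/-- O is a minimal object generator of the concept with extent A. -/
def IsMinObjGen (I : Set (G × M)) (A : Set G) (O : Set G) : Prop :=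
  intDeriv I (ctxExtDeriv I O) = A ∧ ∀ P ⊂ O, intDeriv I (ctxExtDeriv I P) ≠ A

/-- Q is a minimal attribute generator of the concept with intent B. -/
def IsMinAttGen (I : Set (G × M)) (B : Set M) (Q : Set M) : Prop :=
  ctxExtDeriv I (intDeriv I Q) = B ∧ ∀ P ⊂ Q, ctxExtDeriv I (intDeriv I P) ≠ B

/-- Union of all minimal object generators of the atoms of a Boolean suborder
given by an order embedding f of the powerset of Fin k. -/
def genH (I : Set (G × M)) {k : ℕ} (f : Set (Fin k) → Set G × Set M) : Set G :=
  {g | ∃ i : Fin k, ∃ O : Set G, IsMinObjGen I (f {i}).1 O ∧ g ∈ O}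

/-- Union of all minimal attribute generators of the coatoms of a Boolean suborder. -/
def genN (I : Set (G × M)) {k : ℕ} (f : Set (Fin k) → Set G × Set M) : Set M :=
  {m | ∃ i : Fin k, ∃ Q : Set M, IsMinAttGen I (f {i}ᶜ).2 Q ∧ m ∈ Q}

/-! In a contranominal scale `(f i, g j) ∈ I ↔ i ≠ j`, every set `A ⊆ H` is an extent of `[H, N]`:
an object `f i ∉ A` has every attribute of `A` except `g i`, so `g i ∈ A'` and `f i ∉ A''`.
Hence `φ₁` has image `{(A'', A') | A ⊆ H}`, and since `(A₁ ∪ A₂)' = A₁' ∩ A₂'` the join of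
`φ₁ A₁` and `φ₁ A₂` is `φ₁ (A₁ ∪ A₂)`. Dually for `φ₂` and meets. -/

omit [Fintype G] [Fintype M] in
lemma ctxExtDeriv_union (I : Set (G × M)) (A₁ A₂ : Set G) :
    ctxExtDeriv I (A₁ ∪ A₂) = ctxExtDeriv I A₁ ∩ ctxExtDeriv I A₂ := by
  ext m
  simp only [ctxExtDeriv, Set.mem_ofPred_eq, Set.mem_inter_iff, Set.mem_union, or_imp,
    forall_and]

omit [Fintype G] [Fintype M] in
lemma intDeriv_union (I : Set (G × M)) (B₁ B₂ : Set M) :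
    intDeriv I (B₁ ∪ B₂) = intDeriv I B₁ ∩ intDeriv I B₂ := by
  ext g
  simp only [intDeriv, Set.mem_ofPred_eq, Set.mem_inter_iff, Set.mem_union, or_imp,
    forall_and]

section

variable {I : Set (G × M)} {H : Set G} {N : Set M}

omit [Fintype G] [Fintype M] in
lemma join_mem_phi1Image_of_forall_extent
    (hext : ∀ A ⊆ H, IsSubConcept H N (I ∩ H ×ˢ N) A (subExtDeriv N (I ∩ H ×ˢ N) A))
    {c d : Set G × Set M} (hc : c ∈ phi1Image I H N) (hd : d ∈ phi1Image I H N) :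
    conceptJoin I c d ∈ phi1Image I H N := by
  obtain ⟨A₁, B₁, hA₁, rfl⟩ := hc
  obtain ⟨A₂, B₂, hA₂, rfl⟩ := hd
  refine ⟨A₁ ∪ A₂, _, hext _ (Set.union_subset hA₁.1 hA₂.1), ?_⟩
  rw [conceptJoin, ctxExtDeriv_union]

omit [Fintype G] [Fintype M] in
lemma meet_mem_phi2Image_of_forall_intent
    (hint : ∀ B ⊆ N, IsSubConcept H N (I ∩ H ×ˢ N) (subIntDeriv H (I ∩ H ×ˢ N) B) B)
    {c d : Set G × Set M} (hc : c ∈ phi2Image I H N) (hd : d ∈ phi2Image I H N) :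
    conceptMeet I c d ∈ phi2Image I H N := by
  obtain ⟨A₁, B₁, hB₁, rfl⟩ := hc
  obtain ⟨A₂, B₂, hB₂, rfl⟩ := hd
  refine ⟨_, B₁ ∪ B₂, hint _ (Set.union_subset hB₁.2.1 hB₂.2.1), ?_⟩
  rw [conceptMeet, intDeriv_union]

namespace IsContranominal

variable {k : ℕ}

omit [Fintype G] [Fintype M] in
lemma isSubConcept_subExtDeriv (hc : IsContranominal I k H N) {A : Set G} (hA : A ⊆ H) :
    IsSubConcept H N (I ∩ H ×ˢ N) A (subExtDeriv N (I ∩ H ×ˢ N) A) := by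
  obtain ⟨f, g, -, -, rfl, rfl, hI⟩ := hc
  refine ⟨hA, fun _ hn => hn.1, rfl, ?_⟩
  refine Set.Subset.antisymm ?_ fun x hx => ⟨hA hx, fun _ hn => hn.2 x hx⟩
  rintro _ ⟨⟨i, rfl⟩, hi⟩
  by_contra hiA
  have hgi : g i ∈ subExtDeriv (Set.range g) (I ∩ Set.range f ×ˢ Set.range g) A := by
    refine ⟨⟨i, rfl⟩, fun _ hy => ?_⟩
    obtain ⟨j, rfl⟩ := hA hy
    exact ⟨(hI j i).mpr (by rintro rfl; exact hiA hy), ⟨j, rfl⟩, ⟨i, rfl⟩⟩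
  exact (hI i i).mp (hi _ hgi).1 rfl

omit [Fintype G] [Fintype M] in
lemma isSubConcept_subIntDeriv (hc : IsContranominal I k H N) {B : Set M} (hB : B ⊆ N) :
    IsSubConcept H N (I ∩ H ×ˢ N) (subIntDeriv H (I ∩ H ×ˢ N) B) B := by
  obtain ⟨f, g, -, -, rfl, rfl, hI⟩ := hc
  refine ⟨fun _ hx => hx.1, hB, ?_, rfl⟩
  refine Set.Subset.antisymm ?_ fun n hn => ⟨hB hn, fun _ hx => hx.2 n hn⟩
  rintro _ ⟨⟨i, rfl⟩, hi⟩
  by_contra hiB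
  have hfi : f i ∈ subIntDeriv (Set.range f) (I ∩ Set.range f ×ˢ Set.range g) B := by
    refine ⟨⟨i, rfl⟩, fun _ hy => ?_⟩
    obtain ⟨j, rfl⟩ := hB hy
    exact ⟨(hI i j).mpr (by rintro rfl; exact hiB hy), ⟨i, rfl⟩, ⟨j, rfl⟩⟩
  exact (hI i i).mp (hi _ hfi).1 rfl

end IsContranominal

end

theorem stmt10 (I : Set (G × M)) (k : ℕ) (H : Set G) (N : Set M)
    (h : IsContranominal I k H N) :
    (∀ c ∈ phi1Image I H N, ∀ d ∈ phi1Image I H N, conceptJoin I c d ∈ phi1Image I H N) ∧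
    (∀ c ∈ phi2Image I H N, ∀ d ∈ phi2Image I H N, conceptMeet I c d ∈ phi2Image I H N) :=
  ⟨fun _ hc _ hd => join_mem_phi1Image_of_forall_extent (fun _ => h.isSubConcept_subExtDeriv) hc hd,
    fun _ hc _ hd => meet_mem_phi2Image_of_forall_intent (fun _ => h.isSubConcept_subIntDeriv) hc hd⟩
end

section
/- Let K = (G, M, I) be a finite formal context and S ≤ K a subcontext. Then the images φ₁(S) and φ₂(S) (the sets of images of all concepts of S under φ₁(A,B) = (A'',A') resp. φ₂(A,B) = (B',B'')) are equal if and only if for every concept (A,B) of S one has (A' \ B) × (B' \ A) ⊆ I. -/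
variable {G M : Type*} [Fintype G] [Fintype M]

section Derivation

variable {α β : Type*} {I : Set (α × β)} {A : Set α} {B : Set β}

theorem prod_subset_iff_subset_intDeriv : A ×ˢ B ⊆ I ↔ A ⊆ intDeriv I B :=
  ⟨fun h _ hg _ hm => h ⟨hg, hm⟩, fun h p hp => h hp.1 p.2 hp.2⟩

theorem prod_subset_iff_subset_ctxExtDeriv : A ×ˢ B ⊆ I ↔ B ⊆ ctxExtDeriv I A :=
  ⟨fun h _ hm _ hg => h ⟨hg, hm⟩, fun h p hp => h hp.2 p.1 hp.1⟩

theorem ctxExtDeriv_intDeriv_ctxExtDeriv (I : Set (α × β)) (A : Set α) :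
    ctxExtDeriv I (intDeriv I (ctxExtDeriv I A)) = ctxExtDeriv I A :=
  upperPolar_lowerPolar_upperPolar (fun g m => (g, m) ∈ I) A

theorem intDeriv_anti (I : Set (α × β)) : Antitone (intDeriv I) :=
  lowerPolar_anti (r := fun g m => (g, m) ∈ I)

/-- Pairs `(g, m)` with `g ∈ A` or `m ∈ B` lie in `I` automatically. -/
theorem diff_prod_diff_subset_iff :
    (intDeriv I B \ A) ×ˢ (ctxExtDeriv I A \ B) ⊆ I ↔ intDeriv I B ×ˢ ctxExtDeriv I A ⊆ I := by
  refine ⟨fun h ⟨g, m⟩ ⟨hg, hm⟩ => ?_, fun h p hp => h ⟨hp.1.1, hp.2.1⟩⟩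
  by_cases hgA : g ∈ A
  · exact hm g hgA
  by_cases hmB : m ∈ B
  · exact hg m hmB
  exact h ⟨⟨hg, hgA⟩, ⟨hm, hmB⟩⟩

theorem intDeriv_ctxExtDeriv_eq_iff (h : A ×ˢ B ⊆ I) :
    intDeriv I (ctxExtDeriv I A) = intDeriv I B ↔ intDeriv I B ×ˢ ctxExtDeriv I A ⊆ I := by
  have hle : intDeriv I (ctxExtDeriv I A) ⊆ intDeriv I B :=
    intDeriv_anti I (prod_subset_iff_subset_ctxExtDeriv.1 h)
  rw [prod_subset_iff_subset_intDeriv, hle.ge_iff_eq', eq_comm]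

theorem IsSubConcept.prod_subset {H : Set α} {N : Set β}
    (h : IsSubConcept H N (I ∩ H ×ˢ N) A B) : A ×ˢ B ⊆ I := by
  rintro ⟨g, m⟩ ⟨hg, hm⟩
  rw [← h.2.2.1] at hm
  exact (hm.2 g hg).1

end Derivation

theorem stmt12 (I : Set (G × M)) (H : Set G) (N : Set M) :
    (∀ A B, IsSubConcept H N (I ∩ H ×ˢ N) A B →
        ((intDeriv I (ctxExtDeriv I A), ctxExtDeriv I A) : Set G × Set M) =
          (intDeriv I B, ctxExtDeriv I (intDeriv I B))) ↔
    (∀ A B, IsSubConcept H N (I ∩ H ×ˢ N) A B →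
        (intDeriv I B \ A) ×ˢ (ctxExtDeriv I A \ B) ⊆ I) := by
  refine forall₂_congr fun A B => imp_congr_right fun hAB => ?_
  rw [Prod.mk.injEq, diff_prod_diff_subset_iff, ← intDeriv_ctxExtDeriv_eq_iff hAB.prod_subset]
  -- the intents agree once the extents do, since `A' = A'''`
  refine and_iff_left_of_imp fun h => ?_
  rw [← h, ctxExtDeriv_intDeriv_ctxExtDeriv]
end
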